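/- arXiv:1202.1152 — 3 statements merged into one kernel-verified Lean document; each statement's English description precedes it below -/
import Mathlib

section
/- Let t0, y0 ∈ ℝ, a > 0, I = [t0, t0+a], let f : I × ℝ → ℝ be continuous, and let α be a lower solution and β an upper solution of y' = f(t,y), y(t0) = y0 on I with α(t) ≤ β(t) for all t ∈ I. Then there exist differentiable functions φ_*, φ^* : I → ℝ, each satisfying φ(t0) = y0, φ' = f(t, φ) on I, and α ≤ φ ≤ β on I, such that every differentiable φ : I → ℝ with φ(t0) = y0, φ' = f(t, φ) on I, and α ≤ φ ≤ β on I satisfies φ_*(t) ≤ φ(t) ≤ φ^*(t) for all t ∈ I. -/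
/-!
Truncating `f` at `α` and `β` gives a bounded, uniformly continuous field `g` that agrees with `f`
between `α` and `β`, and whose solutions starting there stay there (a comparison argument, since
`g(t, y) = f(t, β t) ≤ β' t` above `β`, and symmetrically below `α`).

For such a `g`, the Lipschitz envelopes `sup_z (g(t, z) - L |y - z|)` approximate `g` uniformly
from above as `L → ∞`; shifting them slightly gives a strictly decreasing sequence of Lipschitz
fields `Gₖ > g` converging uniformly to `g`. The Picard–Lindelöf solutions `φₖ` of
`y' = Gₖ(t, y)` then decrease in `k` and, by strict comparison, dominate every solution of
`y' = g(t, y)`. Their limit satisfies the integral equation of `g`, so it is the greatest solution.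
The least solution is the greatest one of the problem reflected by `y ↦ -y`.
-/

open Set Filter Function Topology
open scoped NNReal

theorem le_on_Icc_of_deriv_lt_of_eq {a b : ℝ} {u v u' v' : ℝ → ℝ}
    (hu : ∀ t ∈ Icc a b, HasDerivWithinAt u (u' t) (Icc a b) t)
    (hv : ∀ t ∈ Icc a b, HasDerivWithinAt v (v' t) (Icc a b) t)
    (ha : u a ≤ v a) (hlt : ∀ t ∈ Ico a b, u t = v t → u' t < v' t) :
    ∀ t ∈ Icc a b, u t ≤ v t := fun _ ht =>
  image_le_of_deriv_right_lt_deriv_boundary' (fun t ht => (hu t ht).continuousWithinAt)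
    (fun t ht => (hu t (Ico_subset_Icc_self ht)).mono_of_mem_nhdsWithin
      (Icc_mem_nhdsGE_of_mem ht))
    ha (fun t ht => (hv t ht).continuousWithinAt)
    (fun t ht => (hv t (Ico_subset_Icc_self ht)).mono_of_mem_nhdsWithin
      (Icc_mem_nhdsGE_of_mem ht))
    hlt ht

theorem le_on_Icc_of_deriv_le_of_ge {a b : ℝ} {u v u' v' : ℝ → ℝ}
    (hu : ∀ t ∈ Icc a b, HasDerivWithinAt u (u' t) (Icc a b) t)
    (hv : ∀ t ∈ Icc a b, HasDerivWithinAt v (v' t) (Icc a b) t)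
    (ha : u a ≤ v a) (hle : ∀ t ∈ Ico a b, v t ≤ u t → u' t ≤ v' t) :
    ∀ t ∈ Icc a b, u t ≤ v t := by
  -- `u - ε (t - a)` touches `v` only where `v ≤ u`, and there its derivative is strictly smaller.
  have hε : ∀ ε > 0, ∀ t ∈ Icc a b, u t - ε * (t - a) ≤ v t := fun ε hε =>
    le_on_Icc_of_deriv_lt_of_eq (u' := fun t => u' t - ε)
      (fun t ht => ((hu t ht).sub
        (((hasDerivWithinAt_id t _).sub_const a).const_mul ε)).congr_deriv (by ring))
      hv (by simpa using ha) fun t ht heq => by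
        have hvu : v t ≤ u t := by nlinarith [ht.1]
        linarith [hle t ht hvu]
  intro t ht
  have hlim : Tendsto (fun ε => u t - ε * (t - a)) (𝓝[>] 0) (𝓝 (u t)) :=
    tendsto_nhdsWithin_of_tendsto_nhds (Continuous.tendsto' (by fun_prop) _ _ (by simp))
  exact le_of_tendsto hlim (eventually_nhdsWithin_of_forall fun ε hε' => hε ε hε' t ht)

theorem IsIntegralCurveOn.le_of_lt {a b : ℝ} {u v : ℝ → ℝ} {F G : ℝ → ℝ → ℝ}
    (hu : IsIntegralCurveOn u F (Icc a b)) (hv : IsIntegralCurveOn v G (Icc a b))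
    (ha : u a ≤ v a) (hFG : ∀ t ∈ Ico a b, ∀ y, F t y < G t y) :
    ∀ t ∈ Icc a b, u t ≤ v t :=
  le_on_Icc_of_deriv_lt_of_eq hu hv ha fun t ht heq => heq ▸ hFG t ht (u t)

/-- The Pasch–Hausdorff envelope, the least `L`-Lipschitz majorant of a function bounded above. -/
noncomputable def lipschitzEnvelope (L : ℝ≥0) (g : ℝ → ℝ) (y : ℝ) : ℝ :=
  ⨆ z, g z - L * |y - z|

namespace lipschitzEnvelope

variable {L : ℝ≥0} {g h : ℝ → ℝ}

theorem bddAbove_range (hg : BddAbove (range g)) (y : ℝ) :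
    BddAbove (range fun z => g z - L * |y - z|) := by
  obtain ⟨C, hC⟩ := hg
  refine ⟨C, forall_mem_range.2 fun z => ?_⟩
  have := hC (mem_range_self z)
  have : 0 ≤ (L : ℝ) * |y - z| := by positivity
  linarith

theorem sub_le (hg : BddAbove (range g)) (y z : ℝ) :
    g z - L * |y - z| ≤ lipschitzEnvelope L g y :=
  le_ciSup (bddAbove_range hg y) z

theorem le_self (hg : BddAbove (range g)) (y : ℝ) : g y ≤ lipschitzEnvelope L g y := by
  simpa using sub_le (L := L) hg y y

theorem lipschitzWith (hg : BddAbove (range g)) : LipschitzWith L (lipschitzEnvelope L g) := by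
  refine LipschitzWith.of_le_add_mul L fun y₁ y₂ => ciSup_le fun z => ?_
  have := sub_le (L := L) hg y₂ z
  have := abs_sub_le y₂ y₁ z
  rw [Real.dist_eq, abs_sub_comm y₂ y₁] at *
  nlinarith [L.2]

theorem le_add_of_forall_le_add {η : ℝ} (hh : BddAbove (range h)) (hgh : ∀ z, g z ≤ h z + η)
    (y : ℝ) :
    lipschitzEnvelope L g y ≤ lipschitzEnvelope L h y + η :=
  ciSup_le fun z => by
    have := sub_le (L := L) hh y z
    linarith [hgh z]

theorem le_add {D δ ε : ℝ} (hD : ∀ y z, g z ≤ g y + D) (hε : 0 ≤ ε)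
    (hδ : ∀ y z, |y - z| < δ → g z ≤ g y + ε) (hL : D ≤ L * δ) (y : ℝ) :
    lipschitzEnvelope L g y ≤ g y + ε := by
  refine ciSup_le fun z => ?_
  have hLz : 0 ≤ (L : ℝ) * |y - z| := by positivity
  rcases lt_or_ge |y - z| δ with hyz | hyz
  · linarith [hδ y z hyz]
  · nlinarith [hD y z, L.2]

end lipschitzEnvelope

theorem UniformContinuousOn.exists_abs_uncurry_sub_lt {X : Type*} [PseudoMetricSpace X]
    {s : Set X} {g : X → ℝ → ℝ} (hg : UniformContinuousOn (uncurry g) (s ×ˢ univ)) {ε : ℝ}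
    (hε : 0 < ε) : ∃ δ > 0, ∀ t ∈ s, ∀ t' ∈ s, ∀ y y',
      dist t t' < δ → |y - y'| < δ → |g t y - g t' y'| < ε := by
  obtain ⟨δ, hδ, hgδ⟩ := Metric.uniformContinuousOn_iff.1 hg ε hε
  refine ⟨δ, hδ, fun t ht t' ht' y y' htt' hyy' => ?_⟩
  simpa [Prod.dist_eq, Real.dist_eq, htt', hyy'] using
    hgδ (t, y) ⟨ht, mem_univ _⟩ (t', y') ⟨ht', mem_univ _⟩

open lipschitzEnvelope in
theorem exists_lipschitzWith_approx_above {X : Type*} [PseudoMetricSpace X] {s : Set X}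
    {g : X → ℝ → ℝ} {C : ℝ} (hg : UniformContinuousOn (uncurry g) (s ×ˢ univ))
    (hC : ∀ t ∈ s, ∀ y, |g t y| ≤ C) {ε : ℝ} (hε : 0 < ε) :
    ∃ (K : ℝ≥0) (F : X → ℝ → ℝ), (∀ t ∈ s, LipschitzWith K (F t)) ∧
      ContinuousOn (uncurry F) (s ×ˢ univ) ∧
      ∀ t ∈ s, ∀ y, g t y ≤ F t y ∧ F t y ≤ g t y + ε := by
  obtain ⟨δ, hδ, hgδ⟩ := hg.exists_abs_uncurry_sub_lt hε
  have hbdd : ∀ t ∈ s, BddAbove (range (g t)) := fun t ht =>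
    ⟨C, forall_mem_range.2 fun y => (abs_le.1 (hC t ht y)).2⟩
  set K := (2 * C / δ).toNNReal
  have hK : 2 * C ≤ K * δ := by
    rw [Real.coe_toNNReal']
    calc 2 * C = 2 * C / δ * δ := by field_simp
      _ ≤ _ := by gcongr; exact le_max_left _ _
  refine ⟨K, fun t => lipschitzEnvelope K (g t), fun t ht => lipschitzWith (hbdd t ht),
    continuousOn_prod_of_continuousOn_lipschitzOnWith' _ K
      (fun t ht => (lipschitzWith (hbdd t ht)).lipschitzOnWith) fun y _ => ?_,
    fun t ht y =>
      ⟨le_self (hbdd t ht) y, le_add (fun y z => ?_) hε.le (fun y z hyz => ?_) hK y⟩⟩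
  · refine Metric.continuousOn_iff.2 fun t ht η hη => ?_
    obtain ⟨δ', hδ', hgδ'⟩ := hg.exists_abs_uncurry_sub_lt (half_pos hη)
    refine ⟨δ', hδ', fun t' ht' htt' => ?_⟩
    have hclose z : |g t' z - g t z| < η / 2 := hgδ' t' ht' t ht z z htt' (by simpa using hδ')
    have h₁ := le_add_of_forall_le_add (L := K) (g := g t') (η := η / 2) (hbdd t ht)
      (fun z => by linarith [abs_sub_lt_iff.1 (hclose z)]) y
    have h₂ := le_add_of_forall_le_add (L := K) (g := g t) (η := η / 2) (hbdd t' ht')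
      (fun z => by linarith [abs_sub_lt_iff.1 (hclose z)]) y
    rw [Real.dist_eq, abs_sub_lt_iff]
    constructor <;> dsimp only [uncurry_apply_pair] <;> linarith
  · linarith [abs_le.1 (hC t ht y), abs_le.1 (hC t ht z)]
  · have := hgδ t ht t ht z y (by simpa using hδ) (by rwa [abs_sub_comm])
    linarith [abs_sub_lt_iff.1 this]

theorem exists_strictAnti_lipschitzWith_approx_above {X : Type*} [PseudoMetricSpace X]
    {s : Set X} {g : X → ℝ → ℝ} {C : ℝ} (hg : UniformContinuousOn (uncurry g) (s ×ˢ univ))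
    (hC : ∀ t ∈ s, ∀ y, |g t y| ≤ C) :
    ∃ (G : ℕ → X → ℝ → ℝ) (K : ℕ → ℝ≥0), (∀ k, ∀ t ∈ s, LipschitzWith (K k) (G k t)) ∧
      (∀ k, ContinuousOn (uncurry (G k)) (s ×ˢ univ)) ∧
      (∀ k, ∀ t ∈ s, ∀ y, g t y < G k t y ∧ G k t y ≤ g t y + (1 / 2) ^ k) ∧
      ∀ k, ∀ t ∈ s, ∀ y, G (k + 1) t y < G k t y := by
  choose K F hFK hF hgF using fun k : ℕ =>
    exists_lipschitzWith_approx_above hg hC (ε := (1 / 2) ^ (k + 2)) (by positivity)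
  -- Shifting the `k`-th approximation up by `(1/2)^(k+1)` makes the sequence strictly decreasing.
  refine ⟨fun k t y => F k t y + (1 / 2) ^ (k + 1), K,
    fun k t ht => by simpa using (hFK k t ht).add (LipschitzWith.const _),
    fun k => (hF k).add continuousOn_const, fun k t ht y => ?_, fun k t ht y => ?_⟩
  · have := hgF k t ht y
    have hk : (0 : ℝ) < (1 / 2) ^ k := by positivity
    simp only [pow_succ] at this ⊢
    constructor <;> linarith
  · have := hgF k t ht y
    have := hgF (k + 1) t ht y
    have hk : (0 : ℝ) < (1 / 2) ^ k := by positivity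
    simp only [pow_succ] at *
    linarith

theorem LipschitzOnWith.of_tendsto {α β ι : Type*} [PseudoEMetricSpace α] [PseudoEMetricSpace β]
    {l : Filter ι} [l.NeBot] {K : ℝ≥0} {s : Set α} {φ : ι → α → β} {ψ : α → β}
    (hφ : ∀ i, LipschitzOnWith K (φ i) s) (hψ : ∀ x ∈ s, Tendsto (fun i => φ i x) l (𝓝 (ψ x))) :
    LipschitzOnWith K ψ s := fun x hx y hy =>
  le_of_tendsto ((hψ x hx).edist (hψ y hy)) (Eventually.of_forall fun i => hφ i hx hy)

theorem IsIntegralCurveOn.lipschitzOnWith {φ : ℝ → ℝ} {F : ℝ → ℝ → ℝ} {s : Set ℝ} {M : ℝ≥0}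
    (hφ : IsIntegralCurveOn φ F s) (hs : Convex ℝ s) (hM : ∀ t ∈ s, |F t (φ t)| ≤ M) :
    LipschitzOnWith M φ s :=
  hs.lipschitzOnWith_of_nnnorm_hasDerivWithin_le hφ fun t ht => by
    rw [← NNReal.coe_le_coe, coe_nnnorm, Real.norm_eq_abs]; exact hM t ht

theorem exists_isIntegralCurveOn_Icc_of_lipschitzWith {F : ℝ → ℝ → ℝ} {t0 T : ℝ} {K M : ℝ≥0}
    (hT : t0 ≤ T) (hF : ContinuousOn (uncurry F) (Icc t0 T ×ˢ univ))
    (hK : ∀ t ∈ Icc t0 T, LipschitzWith K (F t)) (hM : ∀ t ∈ Icc t0 T, ∀ y, |F t y| ≤ M)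
    (y0 : ℝ) : ∃ φ, φ t0 = y0 ∧ IsIntegralCurveOn φ F (Icc t0 T) := by
  have hPL : IsPicardLindelof F (tmin := t0) (tmax := T) ⟨t0, left_mem_Icc.2 hT⟩ y0
      (M * (T - t0).toNNReal) 0 M K :=
    { lipschitzOnWith := fun t ht => (hK t ht).lipschitzOnWith
      continuousOn := fun y _ => hF.uncurry_right y (mem_univ y)
      norm_le := fun t ht y _ => hM t ht y
      mul_max_le := by simp [Real.coe_toNNReal', sub_nonneg.2 hT] }
  exact hPL.exists_eq_forall_mem_Icc_hasDerivWithinAt₀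

theorem IsIntegralCurveOn.of_tendsto {F : ℕ → ℝ → ℝ → ℝ} {g : ℝ → ℝ → ℝ} {φ : ℕ → ℝ → ℝ}
    {ψ : ℝ → ℝ} {ε : ℕ → ℝ} {t0 T M : ℝ} (hφ : ∀ k, IsIntegralCurveOn (φ k) (F k) (Icc t0 T))
    (hF : ∀ k, ContinuousOn (uncurry (F k)) (Icc t0 T ×ˢ univ))
    (hM : ∀ k, ∀ t ∈ Icc t0 T, ∀ y, |F k t y| ≤ M)
    (hFg : ∀ k, ∀ t ∈ Icc t0 T, ∀ y, |F k t y - g t y| ≤ ε k) (hε : Tendsto ε atTop (𝓝 0))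
    (hg : ContinuousOn (uncurry g) (Icc t0 T ×ˢ univ)) (hψ : ContinuousOn ψ (Icc t0 T))
    (hφψ : ∀ t ∈ Icc t0 T, Tendsto (fun k => φ k t) atTop (𝓝 (ψ t))) :
    IsIntegralCurveOn ψ g (Icc t0 T) := by
  intro t ht
  have ht0 : t0 ∈ Icc t0 T := left_mem_Icc.2 (ht.1.trans ht.2)
  have hI : ∀ s ∈ Icc t0 T, uIcc t0 s ⊆ Icc t0 T := fun s hs => uIcc_subset_Icc ht0 hs
  have hlim : ∀ s ∈ Icc t0 T, Tendsto (fun k => F k s (φ k s)) atTop (𝓝 (g s (ψ s))) := by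
    intro s hs
    have hgs : Tendsto (fun k => g s (φ k s)) atTop (𝓝 (g s (ψ s))) :=
      (hg (s, ψ s) ⟨hs, mem_univ _⟩).tendsto.comp <| tendsto_nhdsWithin_iff.2
        ⟨tendsto_const_nhds.prodMk_nhds (hφψ s hs),
          Eventually.of_forall fun _ => ⟨hs, mem_univ _⟩⟩
    have hFs : Tendsto (fun k => F k s (φ k s) - g s (φ k s)) atTop (𝓝 0) :=
      squeeze_zero_norm (fun k => hFg k s hs _) hε
    simpa using hFs.add hgs
  -- Pass to the limit in the integral equations `φ k = picard (F k) (φ k)`.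
  have hpicard : ∀ s ∈ Icc t0 T, ODE.picard g t0 (ψ t0) ψ s = ψ s := by
    intro s hs
    have hk : ∀ k, ODE.picard (F k) t0 (φ k t0) (φ k) s = φ k s := fun k =>
      ODE.picard_eq_of_hasDerivAt ((hF k).mono (prod_mono (hI s hs) subset_rfl))
        (fun r hr => (hφ k r (hI s hs hr)).mono (hI s hs)) (mapsTo_univ _ _)
    refine tendsto_nhds_unique ?_ (hφψ s hs)
    simp_rw [← hk, ODE.picard_apply]
    refine (hφψ t0 ht0).add <|
      intervalIntegral.tendsto_integral_filter_of_dominated_convergence (fun _ => M)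
        (Eventually.of_forall fun k => ?_) (Eventually.of_forall fun k => ?_)
        intervalIntegrable_const ?_
    · exact ((ODE.continuousOn_comp (hF k) (hφ k).continuousOn (mapsTo_univ _ _)).mono
        (uIoc_subset_uIcc.trans (hI s hs))).aestronglyMeasurable measurableSet_uIoc
    · exact MeasureTheory.ae_of_all _ fun r hr => hM k r (hI s hs (uIoc_subset_uIcc hr)) _
    · exact MeasureTheory.ae_of_all _ fun r hr => hlim r (hI s hs (uIoc_subset_uIcc hr))
  exact (ODE.hasDerivWithinAt_picard_Icc ht0 hg hψ (fun _ _ => mem_univ _) (ψ t0) ht).congr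
    (fun s hs => (hpicard s hs).symm) (hpicard t ht).symm

/-- Peano's theorem, with a greatest solution. -/
theorem exists_greatest_isIntegralCurveOn_Icc {g : ℝ → ℝ → ℝ} {t0 T C : ℝ} (hT : t0 ≤ T)
    (hg : UniformContinuousOn (uncurry g) (Icc t0 T ×ˢ univ))
    (hC : ∀ t ∈ Icc t0 T, ∀ y, |g t y| ≤ C) (y0 : ℝ) :
    ∃ φ, φ t0 = y0 ∧ IsIntegralCurveOn φ g (Icc t0 T) ∧
      ∀ ψ, ψ t0 = y0 → IsIntegralCurveOn ψ g (Icc t0 T) → ∀ t ∈ Icc t0 T, ψ t ≤ φ t := by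
  obtain ⟨G, K, hGK, hG, hgG, hGanti⟩ := exists_strictAnti_lipschitzWith_approx_above hg hC
  set M : ℝ≥0 := (C + 1).toNNReal
  have hGM : ∀ k, ∀ t ∈ Icc t0 T, ∀ y, |G k t y| ≤ M := fun k t ht y => by
    have := hgG k t ht y
    have := abs_le.1 (hC t ht y)
    have : ((1 : ℝ) / 2) ^ k ≤ 1 := pow_le_one₀ (by norm_num) (by norm_num)
    exact abs_le.2 ⟨by linarith, by linarith⟩ |>.trans (Real.le_coe_toNNReal _)
  choose φ hφ0 hφ using fun k =>
    exists_isIntegralCurveOn_Icc_of_lipschitzWith hT (hG k) (hGK k) (hGM k) y0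
  have hlip k : LipschitzOnWith M (φ k) (Icc t0 T) :=
    (hφ k).lipschitzOnWith (convex_Icc _ _) fun t ht => hGM k t ht _
  have hanti : ∀ t ∈ Icc t0 T, Antitone (φ · t) := fun t ht => antitone_nat_of_succ_le fun k =>
    IsIntegralCurveOn.le_of_lt (hφ (k + 1)) (hφ k) (by rw [hφ0, hφ0])
      (fun s hs => hGanti k s (Ico_subset_Icc_self hs)) t ht
  have hbdd : ∀ t ∈ Icc t0 T, BddBelow (range (φ · t)) := fun t ht => by
    refine ⟨y0 - M * dist t t0, forall_mem_range.2 fun k => ?_⟩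
    have := (hlip k).dist_le_mul t ht t0 (left_mem_Icc.2 hT)
    rw [Real.dist_eq, hφ0] at this
    linarith [neg_abs_le (φ k t - y0)]
  have hlim : ∀ t ∈ Icc t0 T, Tendsto (φ · t) atTop (𝓝 (⨅ k, φ k t)) := fun t ht =>
    tendsto_atTop_ciInf (hanti t ht) (hbdd t ht)
  refine ⟨fun t => ⨅ k, φ k t, by simp [hφ0], ?_, fun ψ hψ0 hψ t ht => le_ciInf fun k =>
    IsIntegralCurveOn.le_of_lt hψ (hφ k) (by rw [hψ0, hφ0])
      (fun s hs y => (hgG k s (Ico_subset_Icc_self hs) y).1) t ht⟩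
  refine IsIntegralCurveOn.of_tendsto hφ hG hGM (ε := fun k => (1 / 2) ^ k) (fun k t ht y => ?_)
    (tendsto_pow_atTop_nhds_zero_of_lt_one (by norm_num) (by norm_num)) hg.continuousOn
    (LipschitzOnWith.of_tendsto hlip hlim).continuousOn hlim
  have := hgG k t ht y
  exact abs_le.2 ⟨by linarith, by linarith⟩

theorem abs_max_min_sub_max_min_le (a y b a' y' b' : ℝ) :
    |max a (min y b) - max a' (min y' b')| ≤ max |a - a'| (max |y - y'| |b - b'|) :=
  (abs_max_sub_max_le_max _ _ _ _).trans <| max_le_max le_rfl (abs_min_sub_min_le_max _ _ _ _)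

def truncatedField {X : Type*} (f : X → ℝ → ℝ) (α β : X → ℝ) (t : X) (y : ℝ) : ℝ :=
  f t (max (α t) (min y (β t)))

namespace truncatedField

variable {X : Type*} {f : X → ℝ → ℝ} {α β : X → ℝ} {t : X} {y : ℝ}

theorem of_mem (hα : α t ≤ y) (hβ : y ≤ β t) : truncatedField f α β t y = f t y := by
  simp [truncatedField, min_eq_left hβ, max_eq_right hα]

theorem of_le (hαβ : α t ≤ β t) (hy : y ≤ α t) : truncatedField f α β t y = f t (α t) := by
  simp [truncatedField, min_eq_left (hy.trans hαβ), max_eq_left hy]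

theorem of_ge (hαβ : α t ≤ β t) (hy : β t ≤ y) : truncatedField f α β t y = f t (β t) := by
  simp [truncatedField, min_eq_right hy, max_eq_right hαβ]

variable [PseudoMetricSpace X] {s : Set X}

theorem exists_mapsTo (hs : IsCompact s) (hα : ContinuousOn α s) (hβ : ContinuousOn β s) :
    ∃ R, MapsTo (fun p : X × ℝ => (p.1, max (α p.1) (min p.2 (β p.1)))) (s ×ˢ univ)
      (s ×ˢ Icc (-R) R) := by
  obtain ⟨Rα, hRα⟩ := hs.exists_bound_of_continuousOn hα
  obtain ⟨Rβ, hRβ⟩ := hs.exists_bound_of_continuousOn hβ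
  refine ⟨max Rα Rβ, fun p hp => ⟨hp.1, ?_⟩⟩
  have hαR := abs_le.1 ((hRα p.1 hp.1).trans (le_max_left Rα Rβ))
  have hβR := abs_le.1 ((hRβ p.1 hp.1).trans (le_max_right Rα Rβ))
  exact ⟨le_max_of_le_left hαR.1, max_le hαR.2 ((min_le_right _ _).trans hβR.2)⟩

theorem exists_bound (hs : IsCompact s) (hf : ContinuousOn (uncurry f) (s ×ˢ univ))
    (hα : ContinuousOn α s) (hβ : ContinuousOn β s) :
    ∃ C, ∀ t ∈ s, ∀ y, |truncatedField f α β t y| ≤ C := by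
  obtain ⟨R, hR⟩ := exists_mapsTo hs hα hβ
  obtain ⟨C, hC⟩ := (hs.prod isCompact_Icc).exists_bound_of_continuousOn
    (hf.mono (prod_mono subset_rfl (subset_univ (Icc (-R) R))))
  exact ⟨C, fun t ht y => hC _ (hR (mk_mem_prod ht (mem_univ y)))⟩

theorem uniformContinuousOn (hs : IsCompact s) (hf : ContinuousOn (uncurry f) (s ×ˢ univ))
    (hα : ContinuousOn α s) (hβ : ContinuousOn β s) :
    UniformContinuousOn (uncurry (truncatedField f α β)) (s ×ˢ univ) := by
  obtain ⟨R, hR⟩ := exists_mapsTo hs hα hβ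
  refine UniformContinuousOn.comp (g := uncurry f)
    ((hs.prod isCompact_Icc).uniformContinuousOn_of_continuous
      (hf.mono (prod_mono subset_rfl (subset_univ (Icc (-R) R))))) ?_ hR
  refine Metric.uniformContinuousOn_iff.2 fun ε hε => ?_
  obtain ⟨δα, hδα, hα'⟩ :=
    Metric.uniformContinuousOn_iff.1 (hs.uniformContinuousOn_of_continuous hα) ε hε
  obtain ⟨δβ, hδβ, hβ'⟩ :=
    Metric.uniformContinuousOn_iff.1 (hs.uniformContinuousOn_of_continuous hβ) ε hε
  refine ⟨min ε (min δα δβ), by positivity, fun p hp p' hp' hpp' => ?_⟩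
  rw [Prod.dist_eq, max_lt_iff] at hpp'
  have h₁ := lt_min_iff.1 hpp'.1
  have h₂ : |p.2 - p'.2| < ε := (Real.dist_eq _ _ ▸ hpp'.2).trans_le (min_le_left _ _)
  simp only [lt_min_iff] at h₁
  rw [Prod.dist_eq, max_lt_iff, Real.dist_eq]
  refine ⟨h₁.1, (abs_max_min_sub_max_min_le _ _ _ _ _ _).trans_lt (max_lt ?_ (max_lt h₂ ?_))⟩
  · simpa [Real.dist_eq] using hα' _ hp.1 _ hp'.1 h₁.2.1
  · simpa [Real.dist_eq] using hβ' _ hp.1 _ hp'.1 h₁.2.2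

end truncatedField

theorem IsIntegralCurveOn.mem_Icc_of_truncatedField {f : ℝ → ℝ → ℝ} {α β α' β' φ : ℝ → ℝ}
    {t0 T : ℝ} (hφ : IsIntegralCurveOn φ (truncatedField f α β) (Icc t0 T))
    (hα : ∀ t ∈ Icc t0 T, HasDerivWithinAt α (α' t) (Icc t0 T) t)
    (hαf : ∀ t ∈ Icc t0 T, α' t ≤ f t (α t))
    (hβ : ∀ t ∈ Icc t0 T, HasDerivWithinAt β (β' t) (Icc t0 T) t)
    (hβf : ∀ t ∈ Icc t0 T, f t (β t) ≤ β' t) (hαβ : ∀ t ∈ Icc t0 T, α t ≤ β t)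
    (h0 : α t0 ≤ φ t0 ∧ φ t0 ≤ β t0) : ∀ t ∈ Icc t0 T, α t ≤ φ t ∧ φ t ≤ β t := fun t ht =>
  ⟨le_on_Icc_of_deriv_le_of_ge hα hφ h0.1 (fun s hs hφα => by
      rw [truncatedField.of_le (hαβ s (Ico_subset_Icc_self hs)) hφα]
      exact hαf s (Ico_subset_Icc_self hs)) t ht,
    le_on_Icc_of_deriv_le_of_ge hφ hβ h0.2 (fun s hs hβφ => by
      rw [truncatedField.of_ge (hαβ s (Ico_subset_Icc_self hs)) hβφ]
      exact hβf s (Ico_subset_Icc_self hs)) t ht⟩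

theorem isIntegralCurveOn_truncatedField_iff {f : ℝ → ℝ → ℝ} {α β φ : ℝ → ℝ} {s : Set ℝ}
    (hφ : ∀ t ∈ s, α t ≤ φ t ∧ φ t ≤ β t) :
    IsIntegralCurveOn φ (truncatedField f α β) s ↔ IsIntegralCurveOn φ f s :=
  forall₂_congr fun t ht => by rw [truncatedField.of_mem (hφ t ht).1 (hφ t ht).2]

def solutionsBetween (f : ℝ → ℝ → ℝ) (α β : ℝ → ℝ) (t0 T y0 : ℝ) : Set (ℝ → ℝ) :=
  {φ | φ t0 = y0 ∧ IsIntegralCurveOn φ f (Icc t0 T) ∧ ∀ t ∈ Icc t0 T, α t ≤ φ t ∧ φ t ≤ β t}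

theorem neg_mem_solutionsBetween_iff {f : ℝ → ℝ → ℝ} {α β φ : ℝ → ℝ} {t0 T y0 : ℝ} :
    -φ ∈ solutionsBetween (fun t y => -f t (-y)) (-β) (-α) t0 T (-y0) ↔
      φ ∈ solutionsBetween f α β t0 T y0 := by
  have hneg {c t : ℝ} :
      HasDerivWithinAt (-φ) (-c) (Icc t0 T) t ↔ HasDerivWithinAt φ c (Icc t0 T) t :=
    ⟨fun h => by simpa using h.neg, HasDerivWithinAt.neg⟩
  simp [solutionsBetween, IsIntegralCurveOn, hneg, and_comm]

section Between

variable {f : ℝ → ℝ → ℝ} {α β α' β' : ℝ → ℝ} {t0 T y0 : ℝ}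

theorem exists_greatest_solutionsBetween (hT : t0 ≤ T)
    (hf : ContinuousOn (uncurry f) (Icc t0 T ×ˢ univ))
    (hα : ∀ t ∈ Icc t0 T, HasDerivWithinAt α (α' t) (Icc t0 T) t) (hα0 : α t0 ≤ y0)
    (hαf : ∀ t ∈ Icc t0 T, α' t ≤ f t (α t))
    (hβ : ∀ t ∈ Icc t0 T, HasDerivWithinAt β (β' t) (Icc t0 T) t) (hβ0 : y0 ≤ β t0)
    (hβf : ∀ t ∈ Icc t0 T, f t (β t) ≤ β' t) (hαβ : ∀ t ∈ Icc t0 T, α t ≤ β t) :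
    ∃ φ ∈ solutionsBetween f α β t0 T y0,
      ∀ ψ ∈ solutionsBetween f α β t0 T y0, ∀ t ∈ Icc t0 T, ψ t ≤ φ t := by
  have hαc : ContinuousOn α (Icc t0 T) := fun t ht => (hα t ht).continuousWithinAt
  have hβc : ContinuousOn β (Icc t0 T) := fun t ht => (hβ t ht).continuousWithinAt
  obtain ⟨C, hC⟩ := truncatedField.exists_bound isCompact_Icc hf hαc hβc
  obtain ⟨φ, hφ0, hφ, hφ_max⟩ := exists_greatest_isIntegralCurveOn_Icc hT
    (truncatedField.uniformContinuousOn isCompact_Icc hf hαc hβc) hC y0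
  have hφαβ := hφ.mem_Icc_of_truncatedField hα hαf hβ hβf hαβ (hφ0 ▸ ⟨hα0, hβ0⟩)
  exact ⟨φ, ⟨hφ0, (isIntegralCurveOn_truncatedField_iff hφαβ).1 hφ, hφαβ⟩,
    fun ψ ⟨hψ0, hψ, hψαβ⟩ =>
      hφ_max ψ hψ0 ((isIntegralCurveOn_truncatedField_iff hψαβ).2 hψ)⟩

theorem exists_least_solutionsBetween (hT : t0 ≤ T)
    (hf : ContinuousOn (uncurry f) (Icc t0 T ×ˢ univ))
    (hα : ∀ t ∈ Icc t0 T, HasDerivWithinAt α (α' t) (Icc t0 T) t) (hα0 : α t0 ≤ y0)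
    (hαf : ∀ t ∈ Icc t0 T, α' t ≤ f t (α t))
    (hβ : ∀ t ∈ Icc t0 T, HasDerivWithinAt β (β' t) (Icc t0 T) t) (hβ0 : y0 ≤ β t0)
    (hβf : ∀ t ∈ Icc t0 T, f t (β t) ≤ β' t) (hαβ : ∀ t ∈ Icc t0 T, α t ≤ β t) :
    ∃ φ ∈ solutionsBetween f α β t0 T y0,
      ∀ ψ ∈ solutionsBetween f α β t0 T y0, ∀ t ∈ Icc t0 T, φ t ≤ ψ t := by
  -- `y ↦ -y` exchanges lower and upper solutions, and least and greatest solutions.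
  have hf' : ContinuousOn (uncurry fun t y => -f t (-y)) (Icc t0 T ×ˢ univ) :=
    (hf.comp (continuous_fst.prodMk continuous_snd.neg).continuousOn
      fun p hp => ⟨hp.1, mem_univ _⟩).neg
  obtain ⟨φ, hφ, hφ_max⟩ := exists_greatest_solutionsBetween (α' := -β') (β' := -α') hT hf'
    (fun t ht => (hβ t ht).neg) (neg_le_neg hβ0) (fun t ht => by simpa using hβf t ht)
    (fun t ht => (hα t ht).neg) (neg_le_neg hα0) (fun t ht => by simpa using hαf t ht)
    (fun t ht => neg_le_neg (hαβ t ht))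
  refine ⟨-φ, neg_mem_solutionsBetween_iff.1 (by rwa [neg_neg]), fun ψ hψ t ht => ?_⟩
  simpa using neg_le_neg (hφ_max (-ψ) (neg_mem_solutionsBetween_iff.2 hψ) t ht)

end Between

theorem extremal_solutions_between_general (t0 y0 a : ℝ) (ha : 0 < a)
    (f : ℝ → ℝ → ℝ)
    (hf : ContinuousOn (fun p : ℝ × ℝ => f p.1 p.2)
      (Icc t0 (t0 + a) ×ˢ (univ : Set ℝ)))
    (α β α' β' : ℝ → ℝ)
    (hαd : ∀ t ∈ Icc t0 (t0 + a), HasDerivWithinAt α (α' t) (Icc t0 (t0 + a)) t)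
    (hα0 : α t0 ≤ y0)
    (hαf : ∀ t ∈ Icc t0 (t0 + a), α' t ≤ f t (α t))
    (hβd : ∀ t ∈ Icc t0 (t0 + a), HasDerivWithinAt β (β' t) (Icc t0 (t0 + a)) t)
    (hβ0 : y0 ≤ β t0)
    (hβf : ∀ t ∈ Icc t0 (t0 + a), f t (β t) ≤ β' t)
    (hαβ : ∀ t ∈ Icc t0 (t0 + a), α t ≤ β t) :
    ∃ φlow φhigh : ℝ → ℝ,
      (φlow t0 = y0 ∧
        (∀ t ∈ Icc t0 (t0 + a),
          HasDerivWithinAt φlow (f t (φlow t)) (Icc t0 (t0 + a)) t) ∧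
        (∀ t ∈ Icc t0 (t0 + a), α t ≤ φlow t ∧ φlow t ≤ β t)) ∧
      (φhigh t0 = y0 ∧
        (∀ t ∈ Icc t0 (t0 + a),
          HasDerivWithinAt φhigh (f t (φhigh t)) (Icc t0 (t0 + a)) t) ∧
        (∀ t ∈ Icc t0 (t0 + a), α t ≤ φhigh t ∧ φhigh t ≤ β t)) ∧
      ∀ φ : ℝ → ℝ, φ t0 = y0 →
        (∀ t ∈ Icc t0 (t0 + a),
          HasDerivWithinAt φ (f t (φ t)) (Icc t0 (t0 + a)) t) →
        (∀ t ∈ Icc t0 (t0 + a), α t ≤ φ t ∧ φ t ≤ β t) →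
        ∀ t ∈ Icc t0 (t0 + a), φlow t ≤ φ t ∧ φ t ≤ φhigh t := by
  have hT : t0 ≤ t0 + a := by linarith
  obtain ⟨φlow, hlow, hlow_le⟩ :=
    exists_least_solutionsBetween hT hf hαd hα0 hαf hβd hβ0 hβf hαβ
  obtain ⟨φhigh, hhigh, hle_high⟩ :=
    exists_greatest_solutionsBetween hT hf hαd hα0 hαf hβd hβ0 hβf hαβ
  exact ⟨φlow, φhigh, hlow, hhigh, fun φ h0 hφ hφαβ t ht =>
    ⟨hlow_le φ ⟨h0, hφ, hφαβ⟩ t ht, hle_high φ ⟨h0, hφ, hφαβ⟩ t ht⟩⟩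

/-- Between ordered lower and upper solutions `α ≤ β` of the nonlocal problem
`y' = f(t,y)`, `y t0 = y0` on `I = [t0, t0+a]`, there exist a least solution
`φlow` and a greatest solution `φhigh` among all solutions lying in `[α, β]`. -/
theorem extremal_solutions_between (t0 y0 a : ℝ) (ha : 0 < a)
    (f : ℝ → ℝ → ℝ)
    (hf : ContinuousOn (fun p : ℝ × ℝ => f p.1 p.2)
      (Icc t0 (t0 + a) ×ˢ (univ : Set ℝ)))
    (α β α' β' : ℝ → ℝ)
    (hαd : ∀ t ∈ Icc t0 (t0 + a), HasDerivWithinAt α (α' t) (Icc t0 (t0 + a)) t)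
    (hαc : ContinuousOn α' (Icc t0 (t0 + a)))
    (hα0 : α t0 ≤ y0)
    (hαf : ∀ t ∈ Icc t0 (t0 + a), α' t ≤ f t (α t))
    (hβd : ∀ t ∈ Icc t0 (t0 + a), HasDerivWithinAt β (β' t) (Icc t0 (t0 + a)) t)
    (hβc : ContinuousOn β' (Icc t0 (t0 + a)))
    (hβ0 : y0 ≤ β t0)
    (hβf : ∀ t ∈ Icc t0 (t0 + a), f t (β t) ≤ β' t)
    (hαβ : ∀ t ∈ Icc t0 (t0 + a), α t ≤ β t) :
    ∃ φlow φhigh : ℝ → ℝ,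
      (φlow t0 = y0 ∧
        (∀ t ∈ Icc t0 (t0 + a),
          HasDerivWithinAt φlow (f t (φlow t)) (Icc t0 (t0 + a)) t) ∧
        (∀ t ∈ Icc t0 (t0 + a), α t ≤ φlow t ∧ φlow t ≤ β t)) ∧
      (φhigh t0 = y0 ∧
        (∀ t ∈ Icc t0 (t0 + a),
          HasDerivWithinAt φhigh (f t (φhigh t)) (Icc t0 (t0 + a)) t) ∧
        (∀ t ∈ Icc t0 (t0 + a), α t ≤ φhigh t ∧ φhigh t ≤ β t)) ∧
      ∀ φ : ℝ → ℝ, φ t0 = y0 →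
        (∀ t ∈ Icc t0 (t0 + a),
          HasDerivWithinAt φ (f t (φ t)) (Icc t0 (t0 + a)) t) →
        (∀ t ∈ Icc t0 (t0 + a), α t ≤ φ t ∧ φ t ≤ β t) →
        ∀ t ∈ Icc t0 (t0 + a), φlow t ≤ φ t ∧ φ t ≤ φhigh t :=
  extremal_solutions_between_general t0 y0 a ha f hf α β α' β' hαd hα0 hαf hβd hβ0 hβf hαβ
end

section
/- Let t0, y0 ∈ ℝ, a > 0, I = [t0, t0+a], and let f : I × ℝ → ℝ be continuous. If α is a strict lower solution and β is a strict upper solution of y' = f(t,y), y(t0) = y0 on I, then α(t) < β(t) for all t ∈ (t0, t0+a]. -/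
open Set Filter Topology

/-- If `α` is a strict lower solution and `β` a strict upper solution of
`y' = f(t,y)`, `y t0 = y0` on `I = [t0, t0+a]`, then `α < β` on `(t0, t0+a]`. -/
theorem strict_lower_lt_strict_upper (t0 y0 a : ℝ) (ha : 0 < a)
    (f : ℝ → ℝ → ℝ)
    (hf : ContinuousOn (fun p : ℝ × ℝ => f p.1 p.2)
      (Icc t0 (t0 + a) ×ˢ (univ : Set ℝ)))
    (α β α' β' : ℝ → ℝ)
    (hαd : ∀ t ∈ Icc t0 (t0 + a), HasDerivWithinAt α (α' t) (Icc t0 (t0 + a)) t)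
    (hαc : ContinuousOn α' (Icc t0 (t0 + a)))
    (hα0 : α t0 ≤ y0)
    (hαf : ∀ t ∈ Icc t0 (t0 + a), α' t < f t (α t))
    (hβd : ∀ t ∈ Icc t0 (t0 + a), HasDerivWithinAt β (β' t) (Icc t0 (t0 + a)) t)
    (hβc : ContinuousOn β' (Icc t0 (t0 + a)))
    (hβ0 : y0 ≤ β t0)
    (hβf : ∀ t ∈ Icc t0 (t0 + a), f t (β t) < β' t) :
    ∀ t ∈ Ioc t0 (t0 + a), α t < β t := by
  set I := Icc t0 (t0 + a) with hI
  set g : ℝ → ℝ := fun t => β t - α t with hg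
  have hIt0 : t0 ∈ I := by constructor <;> [exact le_rfl; linarith]
  have hgd : ∀ c ∈ I, HasDerivWithinAt g (β' c - α' c) I c :=
    fun c hc => (hβd c hc).sub (hαd c hc)
  have hgcont : ContinuousOn g I := fun c hc => ((hgd c hc).continuousWithinAt)
  have hgt0 : 0 ≤ g t0 := by simp only [hg]; linarith
  have key : ∀ c ∈ I, g c = 0 → 0 < β' c - α' c := by
    intro c hc h0
    have hβα : β c = α c := by
      have := sub_eq_zero.mp h0; linarith [this]
    have h1 := hαf c hc
    have h2 := hβf c hc
    rw [hβα] at h2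
    linarith
  -- eventually positive to the right of t0
  have hev : ∀ᶠ t in 𝓝[Ioc t0 (t0 + a)] t0, 0 < g t := by
    rcases eq_or_lt_of_le hgt0 with h0 | h0
    · -- g t0 = 0, use slope
      have hd := key t0 hIt0 h0.symm
      have hslope := (hasDerivWithinAt_iff_tendsto_slope.mp (hgd t0 hIt0))
      have hev1 : ∀ᶠ t in 𝓝[I \ {t0}] t0, 0 < slope g t0 t :=
        hslope.eventually (eventually_gt_nhds hd)
      have hmono : 𝓝[Ioc t0 (t0 + a)] t0 ≤ 𝓝[I \ {t0}] t0 := by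
        apply nhdsWithin_mono
        intro x hx
        exact ⟨⟨le_of_lt hx.1, hx.2⟩, ne_of_gt hx.1⟩
      filter_upwards [hev1.filter_mono hmono, self_mem_nhdsWithin] with t hslt ht
      rw [slope_def_field, ← h0, sub_zero] at hslt
      rcases div_pos_iff.mp hslt with ⟨hp, _⟩ | ⟨_, hneg⟩
      · exact hp
      · exact absurd hneg (not_lt.mpr (by linarith [ht.1]))
    · have hc := (hgcont t0 hIt0).eventually (eventually_gt_nhds h0)
      have hmono : 𝓝[Ioc t0 (t0 + a)] t0 ≤ 𝓝[I] t0 :=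
        nhdsWithin_mono _ (fun x hx => ⟨le_of_lt hx.1, hx.2⟩)
      exact hc.filter_mono hmono
  -- extract ε
  rw [eventually_nhdsWithin_iff, Metric.eventually_nhds_iff] at hev
  obtain ⟨δ, hδ, hδ'⟩ := hev
  set ε : ℝ := min (δ / 2) a with hε
  have hε0 : 0 < ε := lt_min (by linarith) ha
  have hεa : ε ≤ a := min_le_right _ _
  have hpos : ∀ t ∈ Ioc t0 (t0 + ε), 0 < g t := by
    intro t ht
    apply hδ' (y := t) _ ⟨ht.1, le_trans ht.2 (by linarith)⟩
    rw [Real.dist_eq, abs_of_pos (by linarith [ht.1])]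
    have : t - t0 ≤ ε := by linarith [ht.2]
    have : ε ≤ δ / 2 := min_le_left _ _
    linarith
  -- main argument
  intro t ht
  by_contra hcon
  push_neg at hcon
  have hgt : g t ≤ 0 := by simp only [hg]; linarith
  have htε : t0 + ε < t := by
    by_contra h
    push_neg at h
    exact absurd hgt (not_le.mpr (hpos t ⟨ht.1, h⟩))
  -- the bad set
  set B : Set ℝ := Icc (t0 + ε) (t0 + a) ∩ g ⁻¹' (Iic 0) with hB
  have hBne : B.Nonempty := ⟨t, ⟨le_of_lt htε, ht.2⟩, hgt⟩
  have hBbdd : BddBelow B := ⟨t0 + ε, fun x hx => hx.1.1⟩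
  have hBclosed : IsClosed B := by
    apply ContinuousOn.preimage_isClosed_of_isClosed
      (hgcont.mono (Icc_subset_Icc (by linarith) le_rfl)) isClosed_Icc isClosed_Iic
  set c : ℝ := sInf B with hc
  have hcB : c ∈ B := hBclosed.csInf_mem hBne hBbdd
  have hc1 : t0 + ε ≤ c := hcB.1.1
  have hc2 : c ≤ t0 + a := hcB.1.2
  have hct0 : t0 < c := by linarith
  have hcI : c ∈ I := ⟨by linarith, hc2⟩
  have hgc_le : g c ≤ 0 := hcB.2
  -- g positive on (t0, c)
  have gpos : ∀ s ∈ Ioo t0 c, 0 < g s := by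
    intro s hs
    by_cases hsε : s ≤ t0 + ε
    · exact hpos s ⟨hs.1, hsε⟩
    · push_neg at hsε
      by_contra hgs
      push_neg at hgs
      have hsB : s ∈ B := ⟨⟨le_of_lt hsε, by linarith [hs.2]⟩, hgs⟩
      exact absurd (csInf_le hBbdd hsB) (not_le.mpr hs.2)
  -- g c = 0 by left continuity
  have hneB : (𝓝[Ioo t0 c] c).NeBot := right_nhdsWithin_Ioo_neBot hct0
  have hIooI : Ioo t0 c ⊆ I := fun x hx => ⟨le_of_lt hx.1, by linarith [hx.2]⟩
  have hgc_ge : 0 ≤ g c := by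
    have htend : Tendsto g (𝓝[Ioo t0 c] c) (𝓝 (g c)) :=
      ((hgcont c hcI).mono hIooI).tendsto
    exact ge_of_tendsto htend (eventually_nhdsWithin_of_forall
      (fun s hs => le_of_lt (gpos s hs)))
  have hgc0 : g c = 0 := le_antisymm hgc_le hgc_ge
  have hd := key c hcI hgc0
  -- left slope nonpositive
  have hslope := hasDerivWithinAt_iff_tendsto_slope.mp (hgd c hcI)
  have hmono : 𝓝[Ioo t0 c] c ≤ 𝓝[I \ {c}] c :=
    nhdsWithin_mono _ (fun x hx => ⟨hIooI hx, ne_of_lt hx.2⟩)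
  have hd_le : β' c - α' c ≤ 0 := by
    refine le_of_tendsto (hslope.mono_left hmono) ?_
    apply eventually_nhdsWithin_of_forall
    intro s hs
    rw [slope_def_field, hgc0, sub_zero]
    have h1 : 0 < g s := gpos s hs
    have h2 : s - c < 0 := by linarith [hs.2]
    exact le_of_lt (div_neg_of_pos_of_neg h1 h2)
  linarith
end

section
/- Let t0, y0 ∈ ℝ, a, b, L > 0 with c = min{a, b/L}, I = [t0, t0+c], and let f : [t0,t0+a] × [y0−b, y0+b] → ℝ be continuous with |f| ≤ L on its domain. Then the set S of all differentiable functions φ : I → ℝ with φ(t0) = y0, values in [y0−b, y0+b], and φ'(t) = f(t, φ(t)) on I is a nonempty compact subset of the space C(I) of continuous real-valued functions on I with the supremum norm; moreover every φ ∈ S satisfies |φ(t) − φ(s)| ≤ L|t − s| for all s, t ∈ I. -/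
/-!
Every solution has speed at most `L`, so the solution set lies in the set of `L`-Lipschitz maps
`I → [y₀ - b, y₀ + b]`, which is compact by Arzelà–Ascoli. It is also closed: solutions are the
fixed points of the Picard operator `φ ↦ y₀ + ∫_{t₀}^t f(s, φ s) ds`, and by dominated
convergence a uniform limit of solutions for fields converging uniformly to `f` is again a fixed
point. The same limit argument gives existence (Peano): approximate `f` uniformly by bounded
globally Lipschitz fields (sup-convolutions), solve for those by Picard–Lindelöf, and pass to a
convergent subsequence of the solutions. The choice `c ≤ b / L` keeps all these solutions in
the box.
-/

open Set Filter Topology MeasureTheory Function Metric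
open scoped NNReal

section SupConvolution

variable {α : Type*} [PseudoMetricSpace α] {F : α → ℝ} {s : Set α} {M : ℝ}

noncomputable def supConv (F : α → ℝ) (s : Set α) (K : ℝ≥0) (p : α) : ℝ :=
  ⨆ q : s, F q - K * dist p q

lemma sub_mul_dist_le (hFM : ∀ q ∈ s, F q ≤ M) (K : ℝ≥0) (p : α) (q : s) :
    F q - K * dist p q ≤ M := by
  linarith [hFM q q.2, mul_nonneg K.coe_nonneg (dist_nonneg (x := p) (y := (q : α)))]

lemma bddAbove_range_sub_mul_dist (hFM : ∀ q ∈ s, F q ≤ M) (K : ℝ≥0) (p : α) :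
    BddAbove (range fun q : s => F q - K * dist p q) :=
  ⟨M, forall_mem_range.2 (sub_mul_dist_le hFM K p)⟩

lemma supConv_le [Nonempty s] (hFM : ∀ q ∈ s, F q ≤ M) (K : ℝ≥0) (p : α) :
    supConv F s K p ≤ M :=
  ciSup_le (sub_mul_dist_le hFM K p)

lemma le_supConv (hFM : ∀ q ∈ s, F q ≤ M) (K : ℝ≥0) {p : α} (hp : p ∈ s) :
    F p ≤ supConv F s K p := by
  calc F p = F p - K * dist p p := by simp
    _ ≤ supConv F s K p := le_ciSup (bddAbove_range_sub_mul_dist hFM K p) ⟨p, hp⟩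

lemma lipschitzWith_supConv [Nonempty s] (hFM : ∀ q ∈ s, F q ≤ M) (K : ℝ≥0) :
    LipschitzWith K (supConv F s K) := by
  refine LipschitzWith.of_le_add_mul K fun p p' => ciSup_le fun q => ?_
  calc F q - K * dist p q ≤ F q - K * dist p' q + K * dist p p' := by
        have := mul_le_mul_of_nonneg_left (dist_triangle_left p' (q : α) p) K.coe_nonneg
        rw [mul_add] at this
        linarith
    _ ≤ supConv F s K p' + K * dist p p' := by
        gcongr
        exact le_ciSup (bddAbove_range_sub_mul_dist hFM K p') q

/-- Far from `p` the penalty `K * dist p q ≥ 2 * M` makes the term negligible; close to `p` the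
modulus `δ` of `F` controls it. -/
lemma supConv_le_add [Nonempty s] {δ ε : ℝ}
    (hδ : ∀ p ∈ s, ∀ q ∈ s, dist p q < δ → |F p - F q| < ε) (hFM : ∀ q ∈ s, |F q| ≤ M)
    {K : ℝ≥0} (hK : 2 * M ≤ K * δ) (hε : 0 ≤ ε) {p : α}
    (hp : p ∈ s) : supConv F s K p ≤ F p + ε := by
  refine ciSup_le fun q => ?_
  rcases lt_or_ge (dist p q) δ with hpq | hpq
  · have := abs_lt.1 (hδ p hp q q.2 hpq)
    have := mul_nonneg K.coe_nonneg (dist_nonneg (x := p) (y := (q : α)))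
    linarith
  · have := mul_le_mul_of_nonneg_left hpq K.coe_nonneg
    linarith [(abs_le.1 (hFM q q.2)).2, (abs_le.1 (hFM p hp)).1]

theorem UniformContinuousOn.exists_lipschitzWith_abs_sub_le (hF : UniformContinuousOn F s)
    (hs : s.Nonempty) (hFM : ∀ p ∈ s, |F p| ≤ M) {ε : ℝ} (hε : 0 < ε) :
    ∃ (K : ℝ≥0) (G : α → ℝ), LipschitzWith K G ∧ (∀ p, |G p| ≤ M) ∧
      ∀ p ∈ s, |G p - F p| ≤ ε := by
  have : Nonempty s := hs.to_subtype
  obtain ⟨δ, hδ, hFδ⟩ := Metric.uniformContinuousOn_iff.1 hF ε hε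
  have hFM' : ∀ q ∈ s, F q ≤ M := fun q hq => (abs_le.1 (hFM q hq)).2
  set K : ℝ≥0 := (2 * M / δ).toNNReal
  have hK : 2 * M ≤ K * δ := by
    rw [← div_le_iff₀ hδ]
    exact Real.le_coe_toNNReal _
  have hM : 0 ≤ M := (abs_nonneg _).trans (hFM _ hs.some_mem)
  refine ⟨K, fun p => max (-M) (supConv F s K p),
    (lipschitzWith_supConv hFM' K).const_max _, fun p => ?_, fun p hp => ?_⟩
  · exact abs_le.2 ⟨le_max_left _ _, max_le (by linarith) (supConv_le hFM' K p)⟩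
  · show |max (-M) (supConv F s K p) - F p| ≤ ε
    have hlow := le_supConv hFM' K hp
    have hup := supConv_le_add
      (fun p hp q hq h => by simpa [Real.dist_eq] using hFδ p hp q hq h) hFM hK hε.le hp
    rw [max_eq_right (by linarith [(abs_le.1 (hFM p hp)).1])]
    exact abs_le.2 ⟨by linarith, by linarith⟩

theorem IsCompact.exists_seq_lipschitzWith_tendstoUniformlyOn (hs : IsCompact s)
    (hne : s.Nonempty) (hF : ContinuousOn F s) (hFM : ∀ p ∈ s, |F p| ≤ M) :
    ∃ (K : ℕ → ℝ≥0) (G : ℕ → α → ℝ), (∀ n, LipschitzWith (K n) (G n)) ∧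
      (∀ n p, |G n p| ≤ M) ∧ TendstoUniformlyOn G F atTop s := by
  choose K G hGK hGM hGF using fun n : ℕ =>
    (hs.uniformContinuousOn_of_continuous hF).exists_lipschitzWith_abs_sub_le hne hFM
      (Nat.one_div_pos_of_nat (n := n))
  refine ⟨K, G, hGK, hGM, Metric.tendstoUniformlyOn_iff.2 fun ε hε => ?_⟩
  obtain ⟨N, hN⟩ := exists_nat_one_div_lt hε
  filter_upwards [eventually_ge_atTop N] with n hn p hp
  rw [dist_comm, Real.dist_eq]
  refine (hGF n p hp).trans_lt (lt_of_le_of_lt ?_ hN)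
  gcongr

theorem ContinuousMap.isCompact_setOf_lipschitzWith {X Y : Type*} [PseudoMetricSpace X]
    [MetricSpace Y] (K : ℝ≥0) {u : Set Y} (hu : IsCompact u) :
    IsCompact {g : C(X, Y) | LipschitzWith K g ∧ ∀ x, g x ∈ u} := by
  refine ArzelaAscoli.isCompact_of_equicontinuous _ ?_
    (LipschitzWith.uniformEquicontinuous _ K fun g => g.2.1).equicontinuous
  have himage : ContinuousMap.toFun '' {g : C(X, Y) | LipschitzWith K g ∧ ∀ x, g x ∈ u} =
      {g : X → Y | LipschitzWith K g} ∩ univ.pi fun _ => u := by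
    ext g
    refine ⟨?_, fun hg => ⟨⟨g, hg.1.continuous⟩, ⟨hg.1, fun x => hg.2 x trivial⟩, rfl⟩⟩
    rintro ⟨g, hg, rfl⟩
    exact ⟨hg.1, fun x _ => hg.2 x⟩
  rw [himage]
  exact (isCompact_univ_pi fun _ => hu).of_isClosed_subset
    ((isClosed_setOfPred_lipschitzWith K).inter (isClosed_set_pi fun _ _ => hu.isClosed))
    inter_subset_right

section Solutions

variable {E : Type*} [NormedAddCommGroup E] [NormedSpace ℝ E] {f : ℝ → E → E} {t₀ t₁ : ℝ}
  {y₀ : E} {u : Set E} {φ : ℝ → E}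

def IsSolutionOn (f : ℝ → E → E) (t₀ t₁ : ℝ) (y₀ : E) (u : Set E) (φ : ℝ → E) : Prop :=
  φ t₀ = y₀ ∧ (∀ t ∈ Icc t₀ t₁, φ t ∈ u) ∧
    ∀ t ∈ Icc t₀ t₁, HasDerivWithinAt φ (f t (φ t)) (Icc t₀ t₁) t

def solutionSet (f : ℝ → E → E) (t₀ t₁ : ℝ) (y₀ : E) (u : Set E) : Set C(Icc t₀ t₁, E) :=
  {ψ | ∃ φ : ℝ → E, IsSolutionOn f t₀ t₁ y₀ u φ ∧ ∀ t : Icc t₀ t₁, ψ t = φ t}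

lemma tendsto_picard_of_tendstoUniformlyOn {F : ℕ → ℝ → E → E} {φs : ℕ → ℝ → E} {M : ℝ}
    (hf : ContinuousOn (uncurry f) (Icc t₀ t₁ ×ˢ u))
    (hF : ∀ n, ContinuousOn (uncurry (F n)) (Icc t₀ t₁ ×ˢ u))
    (hFf : TendstoUniformlyOn (fun n => uncurry (F n)) (uncurry f) atTop (Icc t₀ t₁ ×ˢ u))
    (hFM : ∀ n, ∀ t ∈ Icc t₀ t₁, ∀ x ∈ u, ‖F n t x‖ ≤ M)
    (hφs : ∀ n, ContinuousOn (φs n) (Icc t₀ t₁)) (hφsu : ∀ n, ∀ t ∈ Icc t₀ t₁, φs n t ∈ u)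
    (hφu : ∀ t ∈ Icc t₀ t₁, φ t ∈ u)
    (hlim : ∀ t ∈ Icc t₀ t₁, Tendsto (φs · t) atTop (𝓝 (φ t))) {t : ℝ} (ht : t ∈ Icc t₀ t₁) :
    Tendsto (fun n => ODE.picard (F n) t₀ y₀ (φs n) t) atTop
      (𝓝 (ODE.picard f t₀ y₀ φ t)) := by
  have hsub : uIoc t₀ t ⊆ Icc t₀ t₁ := by
    rw [uIoc_of_le ht.1]; exact Ioc_subset_Icc_self.trans (Icc_subset_Icc_right ht.2)
  refine tendsto_const_nhds.add <|
    intervalIntegral.tendsto_integral_filter_of_dominated_convergence (fun _ => M)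
      (Eventually.of_forall fun n => ?_) (Eventually.of_forall fun n => ?_)
      intervalIntegrable_const (ae_of_all _ fun s hs => ?_)
  · exact ((ODE.continuousOn_comp (hF n) (hφs n) (hφsu n)).mono hsub).aestronglyMeasurable
      measurableSet_uIoc
  · exact ae_of_all _ fun s hs => hFM n s (hsub hs) _ (hφsu n s (hsub hs))
  · have hs' := hsub hs
    have hpair : Tendsto (fun n => (s, φs n s)) atTop (𝓝[Icc t₀ t₁ ×ˢ u] (s, φ s)) :=
      tendsto_nhdsWithin_iff.2 ⟨tendsto_const_nhds.prodMk_nhds (hlim s hs'),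
        Eventually.of_forall fun n => ⟨hs', hφsu n s hs'⟩⟩
    exact hFf.tendsto_comp (hf (s, φ s) ⟨hs', hφu s hs'⟩) hpair

namespace IsSolutionOn

lemma continuousOn (h : IsSolutionOn f t₀ t₁ y₀ u φ) : ContinuousOn φ (Icc t₀ t₁) :=
  fun t ht => (h.2.2 t ht).continuousWithinAt

lemma lipschitzOnWith {L : ℝ≥0} (h : IsSolutionOn f t₀ t₁ y₀ u φ)
    (hfL : ∀ t ∈ Icc t₀ t₁, ∀ x ∈ u, ‖f t x‖ ≤ L) : LipschitzOnWith L φ (Icc t₀ t₁) :=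
  (convex_Icc t₀ t₁).lipschitzOnWith_of_nnnorm_hasDerivWithin_le h.2.2
    fun t ht => by simpa [← NNReal.coe_le_coe] using hfL t ht _ (h.2.1 t ht)

lemma domRestrict_mem_solutionSet (h : IsSolutionOn f t₀ t₁ y₀ u φ) :
    ⟨(Icc t₀ t₁).domRestrict φ, h.continuousOn.domRestrict⟩ ∈ solutionSet f t₀ t₁ y₀ u :=
  ⟨φ, h, fun _ => rfl⟩

variable [CompleteSpace E]

lemma picard_eq (h : IsSolutionOn f t₀ t₁ y₀ u φ)
    (hf : ContinuousOn (uncurry f) (Icc t₀ t₁ ×ˢ u)) {t : ℝ} (ht : t ∈ Icc t₀ t₁) :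
    ODE.picard f t₀ y₀ φ t = φ t := by
  have hsub : uIcc t₀ t ⊆ Icc t₀ t₁ := by
    rw [uIcc_of_le ht.1]; exact Icc_subset_Icc_right ht.2
  rw [← h.1]
  exact ODE.picard_eq_of_hasDerivAt (hf.mono (prod_mono hsub subset_rfl))
    (fun s hs => (h.2.2 s (hsub hs)).mono hsub) fun s hs => h.2.1 s (hsub hs)

lemma of_picard_eq (h01 : t₀ ≤ t₁) (hf : ContinuousOn (uncurry f) (Icc t₀ t₁ ×ˢ u))
    (hφ : ContinuousOn φ (Icc t₀ t₁)) (hφu : ∀ t ∈ Icc t₀ t₁, φ t ∈ u)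
    (hpicard : ∀ t ∈ Icc t₀ t₁, φ t = ODE.picard f t₀ y₀ φ t) :
    IsSolutionOn f t₀ t₁ y₀ u φ := by
  refine ⟨(hpicard t₀ (left_mem_Icc.2 h01)).trans ODE.picard_apply₀, hφu, fun t ht => ?_⟩
  exact (ODE.hasDerivWithinAt_picard_Icc (left_mem_Icc.2 h01) hf hφ hφu y₀ ht).congr
    hpicard (hpicard t ht)

theorem of_tendsto {F : ℕ → ℝ → E → E} {φs : ℕ → ℝ → E} {M : ℝ} (h01 : t₀ ≤ t₁)
    (hu : IsClosed u)
    (hf : ContinuousOn (uncurry f) (Icc t₀ t₁ ×ˢ u))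
    (hF : ∀ n, ContinuousOn (uncurry (F n)) (Icc t₀ t₁ ×ˢ u))
    (hFf : TendstoUniformlyOn (fun n => uncurry (F n)) (uncurry f) atTop (Icc t₀ t₁ ×ˢ u))
    (hFM : ∀ n, ∀ t ∈ Icc t₀ t₁, ∀ x ∈ u, ‖F n t x‖ ≤ M)
    (hsol : ∀ n, IsSolutionOn (F n) t₀ t₁ y₀ u (φs n))
    (hlim : ∀ t ∈ Icc t₀ t₁, Tendsto (φs · t) atTop (𝓝 (φ t)))
    (hφ : ContinuousOn φ (Icc t₀ t₁)) : IsSolutionOn f t₀ t₁ y₀ u φ := by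
  have hφu : ∀ t ∈ Icc t₀ t₁, φ t ∈ u := fun t ht =>
    hu.mem_of_tendsto (hlim t ht) (Eventually.of_forall fun n => (hsol n).2.1 t ht)
  refine of_picard_eq h01 hf hφ hφu fun t ht => tendsto_nhds_unique (hlim t ht) ?_
  refine (tendsto_picard_of_tendstoUniformlyOn hf hF hFf hFM (fun n => (hsol n).continuousOn)
    (fun n => (hsol n).2.1) hφu hlim ht).congr fun n => ?_
  exact (hsol n).picard_eq (hF n) ht

end IsSolutionOn

lemma solutionSet_subset {L : ℝ≥0} (hfL : ∀ t ∈ Icc t₀ t₁, ∀ x ∈ u, ‖f t x‖ ≤ L) :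
    solutionSet f t₀ t₁ y₀ u ⊆ {ψ | LipschitzWith L ψ ∧ ∀ t, ψ t ∈ u} := by
  rintro ψ ⟨φ, hφ, hψφ⟩
  have hψ : ⇑ψ = (Icc t₀ t₁).domRestrict φ := funext hψφ
  exact ⟨hψ ▸ (hφ.lipschitzOnWith hfL).to_restrict, fun t => hψφ t ▸ hφ.2.1 t t.2⟩

variable [CompleteSpace E]

theorem mem_solutionSet_of_tendsto {F : ℕ → ℝ → E → E} {M : ℝ} (h01 : t₀ ≤ t₁)
    (hu : IsClosed u)
    (hf : ContinuousOn (uncurry f) (Icc t₀ t₁ ×ˢ u))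
    (hF : ∀ n, ContinuousOn (uncurry (F n)) (Icc t₀ t₁ ×ˢ u))
    (hFf : TendstoUniformlyOn (fun n => uncurry (F n)) (uncurry f) atTop (Icc t₀ t₁ ×ˢ u))
    (hFM : ∀ n, ∀ t ∈ Icc t₀ t₁, ∀ x ∈ u, ‖F n t x‖ ≤ M)
    {ψs : ℕ → C(Icc t₀ t₁, E)} {ψ : C(Icc t₀ t₁, E)}
    (hsol : ∀ n, ψs n ∈ solutionSet (F n) t₀ t₁ y₀ u) (hψ : Tendsto ψs atTop (𝓝 ψ)) :
    ψ ∈ solutionSet f t₀ t₁ y₀ u := by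
  choose φs hφs hψφ using hsol
  refine ⟨ContinuousMap.IccExtend h01 ψ, ?_, fun t => (IccExtend_val h01 ψ t).symm⟩
  refine IsSolutionOn.of_tendsto h01 hu hf hF hFf hFM hφs (fun t ht => ?_)
    (ContinuousMap.IccExtend h01 ψ).continuous.continuousOn
  simp only [ContinuousMap.coe_IccExtend, IccExtend_of_mem h01 _ ht, ← hψφ _ ⟨t, ht⟩]
  exact ((continuous_eval_const _).tendsto ψ).comp hψ

theorem isClosed_solutionSet {L : ℝ≥0} (h01 : t₀ ≤ t₁) (hu : IsClosed u)
    (hf : ContinuousOn (uncurry f) (Icc t₀ t₁ ×ˢ u))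
    (hfL : ∀ t ∈ Icc t₀ t₁, ∀ x ∈ u, ‖f t x‖ ≤ L) : IsClosed (solutionSet f t₀ t₁ y₀ u) :=
  IsSeqClosed.isClosed fun _ _ hsol hψ =>
    mem_solutionSet_of_tendsto (F := fun _ => f) h01 hu hf (fun _ => hf)
      (fun _ hU => Eventually.of_forall fun _ _ _ => refl_mem_uniformity hU) (fun _ => hfL)
      hsol hψ

theorem isCompact_solutionSet {L : ℝ≥0} (h01 : t₀ ≤ t₁) (hu : IsCompact u)
    (hf : ContinuousOn (uncurry f) (Icc t₀ t₁ ×ˢ u))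
    (hfL : ∀ t ∈ Icc t₀ t₁, ∀ x ∈ u, ‖f t x‖ ≤ L) : IsCompact (solutionSet f t₀ t₁ y₀ u) :=
  (ContinuousMap.isCompact_setOf_lipschitzWith L hu).of_isClosed_subset
    (isClosed_solutionSet h01 hu.isClosed hf hfL) (solutionSet_subset hfL)

theorem exists_isSolutionOn_closedBall {K L : ℝ≥0} (hf : Continuous (uncurry f))
    (hlip : ∀ t, LipschitzWith K (f t)) (hfL : ∀ t x, ‖f t x‖ ≤ L) {b : ℝ} (h01 : t₀ ≤ t₁)
    (hLb : L * (t₁ - t₀) ≤ b) (y₀ : E) :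
    ∃ φ, IsSolutionOn f t₀ t₁ y₀ (closedBall y₀ b) φ := by
  have hpl : IsPicardLindelof f (tmin := t₀) (tmax := t₁) ⟨t₀, left_mem_Icc.2 h01⟩ y₀
      (L * (t₁ - t₀).toNNReal) 0 L K :=
    { lipschitzOnWith := fun t _ => (hlip t).lipschitzOnWith
      continuousOn := fun x _ => (hf.comp (continuous_id.prodMk continuous_const)).continuousOn
      norm_le := fun t _ x _ => hfL t x
      mul_max_le := by simp [Real.coe_toNNReal _ (sub_nonneg.2 h01), h01] }
  obtain ⟨φ, hφ₀, hφ⟩ := hpl.exists_eq_forall_mem_Icc_hasDerivWithinAt₀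
  have hsol : IsSolutionOn f t₀ t₁ y₀ univ φ := ⟨hφ₀, fun _ _ => trivial, hφ⟩
  refine ⟨φ, hφ₀, fun t ht => ?_, hφ⟩
  have hdist := (hsol.lipschitzOnWith fun t _ x _ => hfL t x).dist_le_mul t ht t₀
    (left_mem_Icc.2 h01)
  rw [hφ₀, Real.dist_eq, abs_of_nonneg (sub_nonneg.2 ht.1)] at hdist
  rw [mem_closedBall]
  calc dist (φ t) y₀ ≤ L * (t - t₀) := hdist
    _ ≤ L * (t₁ - t₀) := by gcongr; exact ht.2
    _ ≤ b := hLb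

end Solutions

theorem solutionSet_nonempty {f : ℝ → ℝ → ℝ} {t₀ t₁ y₀ b : ℝ} {L : ℝ≥0} (h01 : t₀ ≤ t₁)
    (hf : ContinuousOn (uncurry f) (Icc t₀ t₁ ×ˢ closedBall y₀ b))
    (hfL : ∀ t ∈ Icc t₀ t₁, ∀ x ∈ closedBall y₀ b, ‖f t x‖ ≤ L) (hLb : L * (t₁ - t₀) ≤ b) :
    (solutionSet f t₀ t₁ y₀ (closedBall y₀ b)).Nonempty := by
  set s := Icc t₀ t₁ ×ˢ closedBall y₀ b
  have hb : 0 ≤ b := (mul_nonneg L.coe_nonneg (sub_nonneg.2 h01)).trans hLb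
  have hs : s.Nonempty := ⟨(t₀, y₀), left_mem_Icc.2 h01, mem_closedBall_self hb⟩
  obtain ⟨K, G, hGK, hGL, hGf⟩ := (isCompact_Icc.prod (isCompact_closedBall y₀ b))
    |>.exists_seq_lipschitzWith_tendstoUniformlyOn hs hf fun p hp => hfL p.1 hp.1 p.2 hp.2
  set F : ℕ → ℝ → ℝ → ℝ := fun n t x => G n (t, x)
  have hFL : ∀ n t x, ‖F n t x‖ ≤ L := fun n t x => hGL n (t, x)
  have hsol : ∀ n, ∃ ψ, ψ ∈ solutionSet (F n) t₀ t₁ y₀ (closedBall y₀ b) := fun n =>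
    have ⟨_, hφ⟩ := exists_isSolutionOn_closedBall (f := F n) (hGK n).continuous
      (fun t => ((hGK n).comp (LipschitzWith.prodMk_left t)).weaken (mul_one _).le)
      (hFL n) h01 hLb y₀
    ⟨_, hφ.domRestrict_mem_solutionSet⟩
  choose ψs hψs using hsol
  obtain ⟨ψ, -, σ, hσ, hψ⟩ := (ContinuousMap.isCompact_setOf_lipschitzWith L
    (isCompact_closedBall y₀ b)).tendsto_subseq
    fun n => solutionSet_subset (fun t _ x _ => hFL n t x) (hψs n)
  refine ⟨ψ, mem_solutionSet_of_tendsto (F := fun k => F (σ k)) h01 isClosed_closedBall hf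
    (fun k => (hGK (σ k)).continuous.continuousOn) (fun U hU => ?_)
    (fun k t _ x _ => hFL (σ k) t x) (fun k => hψs (σ k)) hψ⟩
  exact hσ.tendsto_atTop.eventually (hGf U hU)

/-- The solution set of the IVP `y' = f(t,y)`, `y t0 = y0` on `I = [t0, t0+c]`,
`c = min a (b/L)`, regarded as a subset of the space `C(I, ℝ)` of continuous
functions with the supremum norm, is nonempty and compact, and each solution is
`L`-Lipschitz. -/
theorem solution_set_compact (t0 y0 a b L : ℝ)
    (ha : 0 < a) (hb : 0 < b) (hL : 0 < L)
    (c : ℝ) (hc : c = min a (b / L))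
    (f : ℝ → ℝ → ℝ)
    (hf : ContinuousOn (fun p : ℝ × ℝ => f p.1 p.2)
      (Icc t0 (t0 + a) ×ˢ Icc (y0 - b) (y0 + b)))
    (hfL : ∀ t ∈ Icc t0 (t0 + a), ∀ y ∈ Icc (y0 - b) (y0 + b), |f t y| ≤ L)
    (S : Set C(Icc t0 (t0 + c), ℝ))
    (hS : S = {ψ : C(Icc t0 (t0 + c), ℝ) | ∃ φ : ℝ → ℝ,
      (φ t0 = y0 ∧
        (∀ t ∈ Icc t0 (t0 + c), φ t ∈ Icc (y0 - b) (y0 + b)) ∧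
        (∀ t ∈ Icc t0 (t0 + c),
          HasDerivWithinAt φ (f t (φ t)) (Icc t0 (t0 + c)) t)) ∧
      ∀ t : Icc t0 (t0 + c), ψ t = φ t}) :
    S.Nonempty ∧ IsCompact S ∧
      ∀ ψ ∈ S, ∀ s t : Icc t0 (t0 + c),
        |ψ t - ψ s| ≤ L * |(t : ℝ) - (s : ℝ)| := by
  lift L to ℝ≥0 using hL.le
  have hca : c ≤ a := hc ▸ min_le_left _ _
  have hLc : L * c ≤ b := by
    rw [mul_comm, ← le_div_iff₀ hL]
    exact hc ▸ min_le_right _ _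
  have h01 : t0 ≤ t0 + c := le_add_of_nonneg_right (hc ▸ le_min ha.le (by positivity))
  have hI : Icc t0 (t0 + c) ⊆ Icc t0 (t0 + a) := Icc_subset_Icc_right (by linarith)
  rw [← Real.closedBall_eq_Icc] at hf hfL hS
  have hf' : ContinuousOn (uncurry f) (Icc t0 (t0 + c) ×ˢ closedBall y0 b) :=
    hf.mono (prod_mono hI subset_rfl)
  have hfL' : ∀ t ∈ Icc t0 (t0 + c), ∀ y ∈ closedBall y0 b, ‖f t y‖ ≤ L :=
    fun t ht y hy => hfL t (hI ht) y hy
  change S = solutionSet f t0 (t0 + c) y0 (closedBall y0 b) at hS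
  subst hS
  refine ⟨solutionSet_nonempty h01 hf' hfL' (by rwa [add_sub_cancel_left]),
    isCompact_solutionSet h01 (isCompact_closedBall y0 b) hf' hfL', fun ψ hψ s t => ?_⟩
  simpa [Subtype.dist_eq, Real.dist_eq] using
    ((solutionSet_subset hfL' hψ).1.dist_le_mul t s)
end SupConvolution
end
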